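/- arXiv:0909.2554 — 5 statements merged into one kernel-verified Lean document; each statement's English description precedes it below -/
import Mathlib

section
/- The inductance map A ↦ e(A) = d(A̅)/d(A) is a bijection from the set of all admissible linear chains onto the set of rational numbers in the open interval (0,1). -/
/-- The tridiagonal matrix associated to a linear chain `A = [a₁,…,a_r]`:
diagonal entries `aᵢ`, entries `-1` immediately above/below the diagonal, `0` elsewhere. -/
def chainMatrix (A : List ℤ) : Matrix (Fin A.length) (Fin A.length) ℤ :=
  fun i j =>
    if i = j then A.get i
    else if (i : ℕ) + 1 = (j : ℕ) ∨ (j : ℕ) + 1 = (i : ℕ) then -1 else 0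

/-- The discriminant `d(A)` of a linear chain: the determinant of `chainMatrix A`
(the `0 × 0` determinant being `1` for the empty list). -/
def disc (A : List ℤ) : ℤ := (chainMatrix A).det


/-- `chainMatrix (a :: l)` with its index type reduced. -/
def cm (a : ℤ) (l : List ℤ) : Matrix (Fin (l.length + 1)) (Fin (l.length + 1)) ℤ :=
  chainMatrix (a :: l)

/-- `chainMatrix (a :: b :: l)` with its index type reduced. -/
def cm2 (a b : ℤ) (l : List ℤ) : Matrix (Fin (l.length + 2)) (Fin (l.length + 2)) ℤ :=
  chainMatrix (a :: b :: l)

lemma disc_cons_eq (a : ℤ) (l : List ℤ) : disc (a :: l) = (cm a l).det := rfl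

lemma disc_cons2_eq (a b : ℤ) (l : List ℤ) : disc (a :: b :: l) = (cm2 a b l).det := rfl

lemma cm_apply (a : ℤ) (l : List ℤ) (i j : Fin (l.length + 1)) :
    cm a l i j = if i = j then (a :: l).get i
      else if (i : ℕ) + 1 = (j : ℕ) ∨ (j : ℕ) + 1 = (i : ℕ) then -1 else 0 := rfl

lemma cm2_apply (a b : ℤ) (l : List ℤ) (i j : Fin (l.length + 2)) :
    cm2 a b l i j = if i = j then (a :: b :: l).get i
      else if (i : ℕ) + 1 = (j : ℕ) ∨ (j : ℕ) + 1 = (i : ℕ) then -1 else 0 := rfl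

lemma cm_succ_succ (a : ℤ) (l : List ℤ) (i j : Fin l.length) :
    cm a l i.succ j.succ = chainMatrix l i j := by
  rw [cm_apply]
  simp only [chainMatrix, Fin.succ_inj, Fin.val_succ]
  have h : ((i : ℕ) + 1 + 1 = (j : ℕ) + 1 ∨ (j : ℕ) + 1 + 1 = (i : ℕ) + 1) ↔
      ((i : ℕ) + 1 = (j : ℕ) ∨ (j : ℕ) + 1 = (i : ℕ)) := by omega
  simp only [h]
  rcases eq_or_ne i j with rfl | hij
  · simp
  · simp [hij]

lemma cm2_succ_succ (a b : ℤ) (l : List ℤ) (i j : Fin (l.length + 1)) :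
    cm2 a b l i.succ j.succ = cm b l i j := by
  rw [cm2_apply, cm_apply]
  simp only [Fin.succ_inj, Fin.val_succ]
  have h : ((i : ℕ) + 1 + 1 = (j : ℕ) + 1 ∨ (j : ℕ) + 1 + 1 = (i : ℕ) + 1) ↔
      ((i : ℕ) + 1 = (j : ℕ) ∨ (j : ℕ) + 1 = (i : ℕ)) := by omega
  simp only [h]
  rcases eq_or_ne i j with rfl | hij
  · simp
  · simp [hij]

lemma cm2_submatrix (a b : ℤ) (l : List ℤ) :
    (cm2 a b l).submatrix Fin.succ Fin.succ = cm b l := by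
  ext i j
  exact cm2_succ_succ a b l i j

lemma disc_nil : disc [] = 1 := by
  simp [disc, Matrix.det_isEmpty]

lemma disc_singleton (a : ℤ) : disc [a] = a := by
  rw [disc_cons_eq, Matrix.det_fin_one, cm_apply]
  simp

lemma cm_submatrix (a : ℤ) (l : List ℤ) :
    (cm a l).submatrix Fin.succ Fin.succ = chainMatrix l := by
  ext i j
  exact cm_succ_succ a l i j

lemma det_minor_one (a b : ℤ) (l : List ℤ) :
    Matrix.det ((cm2 a b l).submatrix Fin.succ (Fin.succAbove 1)) = - disc l := by
  rw [Matrix.det_succ_column_zero, Fin.sum_univ_succ]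
  have h1 : ((cm2 a b l).submatrix Fin.succ (Fin.succAbove 1)) 0 0 = -1 := by
    rw [Matrix.submatrix_apply, Fin.one_succAbove_zero]
    rw [show ((0 : Fin (l.length + 1)).succ) = (1 : Fin (l.length + 2)) from rfl]
    rw [cm2_apply]
    norm_num
  have h2' : ∀ i : Fin l.length,
      ((cm2 a b l).submatrix Fin.succ (Fin.succAbove 1)) i.succ 0 = 0 := by
    intro i
    rw [Matrix.submatrix_apply, Fin.one_succAbove_zero, cm2_apply]
    have hne : i.succ.succ ≠ (0 : Fin (l.length + 2)) := Fin.succ_ne_zero _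
    rw [if_neg hne]
    have : ¬ (((i.succ.succ : Fin (l.length+2)) : ℕ) + 1 = ((0 : Fin (l.length+2)) : ℕ) ∨
        ((0 : Fin (l.length+2)) : ℕ) + 1 = ((i.succ.succ : Fin (l.length+2)) : ℕ)) := by
      simp [Fin.val_succ]
    rw [if_neg this]
  have h3 : ((cm2 a b l).submatrix Fin.succ (Fin.succAbove 1)).submatrix
      (Fin.succAbove 0) Fin.succ = chainMatrix l := by
    rw [Fin.succAbove_zero]
    ext i j
    rw [Matrix.submatrix_apply, Matrix.submatrix_apply, Fin.one_succAbove_succ]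
    rw [show ((cm2 a b l) i.succ.succ j.succ.succ = chainMatrix l i j) =
      ((cm2 a b l) i.succ.succ j.succ.succ = chainMatrix l i j) from rfl]
    rw [cm2_succ_succ, cm_succ_succ]
  simp only [h2', mul_zero, zero_mul, Finset.sum_const_zero, add_zero, h1, h3]
  simp [disc]

lemma disc_cons (a b : ℤ) (l : List ℤ) :
    disc (a :: b :: l) = a * disc (b :: l) - disc l := by
  rw [disc_cons2_eq, Matrix.det_succ_row_zero, Fin.sum_univ_succ, Fin.sum_univ_succ]
  have h0 : cm2 a b l 0 0 = a := by rw [cm2_apply]; simp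
  have h1 : cm2 a b l 0 (Fin.succ 0) = -1 := by
    rw [cm2_apply]
    have : (0 : Fin (l.length + 2)) ≠ Fin.succ 0 := (Fin.succ_ne_zero _).symm
    rw [if_neg this]
    simp
  have hz : ∀ j : Fin l.length, cm2 a b l 0 j.succ.succ = 0 := by
    intro j
    rw [cm2_apply]
    have hne : (0 : Fin (l.length + 2)) ≠ j.succ.succ := (Fin.succ_ne_zero _).symm
    rw [if_neg hne]
    have : ¬ (((0 : Fin (l.length+2)) : ℕ) + 1 = ((j.succ.succ : Fin (l.length+2)) : ℕ) ∨
        ((j.succ.succ : Fin (l.length+2)) : ℕ) + 1 = ((0 : Fin (l.length+2)) : ℕ)) := by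
      simp [Fin.val_succ]
    rw [if_neg this]
  have hm0 : (cm2 a b l).submatrix Fin.succ (Fin.succAbove 0) = cm b l := by
    rw [Fin.succAbove_zero]; exact cm2_submatrix a b l
  rw [show Fin.succ (0 : Fin (l.length + 1)) = (1 : Fin (l.length + 2)) from rfl] at h1 ⊢
  rw [h0, h1, hm0, det_minor_one]
  simp only [hz, mul_zero, zero_mul, Finset.sum_const_zero, add_zero]
  rw [disc_cons_eq]
  norm_num
  ring

def DD : List ℤ → ℤ
  | [] => 1
  | [a] => a
  | a :: b :: l => a * DD (b :: l) - DD l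

lemma disc_eq_DD : ∀ A : List ℤ, disc A = DD A
  | [] => disc_nil
  | [a] => disc_singleton a
  | a :: b :: l => by
      rw [disc_cons, disc_eq_DD (b :: l), disc_eq_DD l, DD]

lemma DD_bounds : ∀ A : List ℤ, (∀ a ∈ A, 2 ≤ a) → 0 < DD A ∧ (A ≠ [] → DD A.tail < DD A)
  | [], _ => ⟨one_pos, by simp⟩
  | [a], h => by
      have ha : 2 ≤ a := h a (by simp)
      refine ⟨by simp [DD]; omega, fun _ => ?_⟩
      simp [DD]; omega
  | a :: b :: l, h => by
      have ha : 2 ≤ a := h a (by simp)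
      have h1 := DD_bounds (b :: l) (fun x hx => h x (by simp [hx]))
      have h2 := h1.2 (by simp)
      simp only [List.tail_cons] at h2 ⊢
      have hpos := h1.1
      constructor
      · show 0 < a * DD (b :: l) - DD l
        nlinarith
      · intro _
        show DD (b :: l) < a * DD (b :: l) - DD l
        nlinarith

lemma DD_pos (A : List ℤ) (h : ∀ a ∈ A, 2 ≤ a) : 0 < DD A := (DD_bounds A h).1

lemma DD_tail_lt (A : List ℤ) (h : ∀ a ∈ A, 2 ≤ a) (hne : A ≠ []) : DD A.tail < DD A :=
  (DD_bounds A h).2 hne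

/-- A linear chain is admissible if it is nonempty and all of its entries are `≥ 2`. -/
def Admissible (A : List ℤ) : Prop := A ≠ [] ∧ ∀ a ∈ A, 2 ≤ a

/-- The inductance `e(A) = d(A̅)/d(A)` of a linear chain, as a rational number. -/
def inductance (A : List ℤ) : ℚ := (disc A.tail : ℚ) / (disc A : ℚ)


/-- Auxiliary: the inductance with the convention `F [] = 0`. -/
def F (l : List ℤ) : ℚ := if l = [] then 0 else (DD l.tail : ℚ) / (DD l : ℚ)

lemma inductance_eq_F (l : List ℤ) (hne : l ≠ []) : inductance l = F l := by
  rw [inductance, F, if_neg hne, disc_eq_DD, disc_eq_DD]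

lemma tail_all {l : List ℤ} (h : ∀ a ∈ l, 2 ≤ a) : ∀ a ∈ l.tail, 2 ≤ a :=
  fun a ha => h a (List.mem_of_mem_tail ha)

lemma F_nonneg (l : List ℤ) (h : ∀ a ∈ l, 2 ≤ a) : 0 ≤ F l := by
  rw [F]
  split_ifs with hl
  · exact le_refl _
  · apply div_nonneg
    · exact_mod_cast (DD_pos l.tail (tail_all h)).le
    · exact_mod_cast (DD_pos l h).le

lemma F_lt_one (l : List ℤ) (h : ∀ a ∈ l, 2 ≤ a) : F l < 1 := by
  rw [F]
  split_ifs with hl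
  · norm_num
  · rw [div_lt_one (by exact_mod_cast DD_pos l h)]
    exact_mod_cast DD_tail_lt l h hl

lemma F_pos (l : List ℤ) (h : ∀ a ∈ l, 2 ≤ a) (hne : l ≠ []) : 0 < F l := by
  rw [F, if_neg hne]
  apply div_pos
  · exact_mod_cast DD_pos l.tail (tail_all h)
  · exact_mod_cast DD_pos l h

lemma inductance_cons (a : ℤ) (l : List ℤ) (ha : 2 ≤ a) (hl : ∀ x ∈ l, 2 ≤ x) :
    inductance (a :: l) = 1 / ((a : ℚ) - F l) := by
  rcases l with _ | ⟨b, m⟩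
  · rw [inductance, disc_eq_DD, disc_eq_DD]
    show ((DD [] : ℚ)) / (DD [a] : ℚ) = 1 / ((a : ℚ) - F [])
    rw [show DD [] = 1 from rfl, show DD [a] = a from rfl, show F [] = 0 from rfl]
    norm_num
  · have hb : ∀ x ∈ (b :: m), 2 ≤ x := hl
    have hpos : (0 : ℚ) < (DD (b :: m) : ℚ) := by exact_mod_cast DD_pos _ hb
    have hA : ∀ x ∈ a :: b :: m, 2 ≤ x := by
      intro x hx
      rcases List.mem_cons.1 hx with rfl | hx
      · exact ha
      · exact hb x hx
    have hApos : (0 : ℚ) < ((a : ℚ) * DD (b :: m) - DD m) := by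
      have := DD_pos (a :: b :: m) hA
      rw [show DD (a :: b :: m) = a * DD (b :: m) - DD m from rfl] at this
      exact_mod_cast this
    rw [inductance, disc_eq_DD, disc_eq_DD, F, if_neg (by simp)]
    simp only [List.tail_cons]
    rw [show DD (a :: b :: m) = a * DD (b :: m) - DD m from rfl]
    push_cast
    have hF : (a : ℚ) - (DD m : ℚ) / (DD (b :: m) : ℚ) =
        ((a : ℚ) * DD (b :: m) - DD m) / DD (b :: m) := by
      field_simp
    rw [hF, one_div_div]

lemma inductance_mem_Ioo (A : List ℤ) (hA : Admissible A) : inductance A ∈ Set.Ioo (0 : ℚ) 1 := by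
  obtain ⟨hne, h2⟩ := hA
  rcases A with _ | ⟨a, l⟩
  · exact absurd rfl hne
  · have ha : 2 ≤ a := h2 a (by simp)
    have hl : ∀ x ∈ l, 2 ≤ x := fun x hx => h2 x (by simp [hx])
    rw [inductance_cons a l ha hl]
    have hF0 := F_nonneg l hl
    have hF1 := F_lt_one l hl
    have h1 : 1 < (a : ℚ) - F l := by
      have : (2 : ℚ) ≤ (a : ℚ) := by exact_mod_cast ha
      linarith
    constructor
    · positivity
    · rw [div_lt_one (by linarith)]; linarith

lemma inductance_injOn_aux :
    ∀ n : ℕ, ∀ A B : List ℤ, A.length ≤ n → Admissible A → Admissible B →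
      inductance A = inductance B → A = B := by
  intro n
  induction n with
  | zero =>
    intro A B hlen hA _ _
    rcases A with _ | ⟨a, l⟩
    · exact absurd rfl hA.1
    · simp at hlen
  | succ n ih =>
    intro A B hlen hA hB heq
    rcases A with _ | ⟨a, l⟩; · exact absurd rfl hA.1
    rcases B with _ | ⟨b, m⟩; · exact absurd rfl hB.1
    have ha : 2 ≤ a := hA.2 a (by simp)
    have hl : ∀ x ∈ l, 2 ≤ x := fun x hx => hA.2 x (by simp [hx])
    have hb : 2 ≤ b := hB.2 b (by simp)
    have hm : ∀ x ∈ m, 2 ≤ x := fun x hx => hB.2 x (by simp [hx])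
    rw [inductance_cons a l ha hl, inductance_cons b m hb hm] at heq
    have hFl0 := F_nonneg l hl
    have hFl1 := F_lt_one l hl
    have hFm0 := F_nonneg m hm
    have hFm1 := F_lt_one m hm
    have ha' : (2 : ℚ) ≤ (a : ℚ) := by exact_mod_cast ha
    have hb' : (2 : ℚ) ≤ (b : ℚ) := by exact_mod_cast hb
    rw [one_div, one_div] at heq
    have hxy : (a : ℚ) - F l = (b : ℚ) - F m := inv_injective heq
    have hab : a = b := by
      have h1 : ((a - b : ℤ) : ℚ) = F l - F m := by push_cast; linarith
      have h2 : |((a - b : ℤ) : ℚ)| < 1 := by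
        rw [h1, abs_lt]; constructor <;> linarith
      have h3 : |a - b| < 1 := by exact_mod_cast h2
      have := abs_lt.mp h3
      omega
    subst hab
    have hF : F l = F m := by linarith
    rcases eq_or_ne l [] with rfl | hlne
    · rcases eq_or_ne m [] with rfl | hmne
      · rfl
      · exact absurd (hF ▸ F_pos m hm hmne) (by rw [show F [] = 0 from rfl]; simp)
    · rcases eq_or_ne m [] with rfl | hmne
      · exact absurd (hF ▸ F_pos l hl hlne) (by rw [show F [] = 0 from rfl]; simp)
      · have : l = m := by
          apply ih l m (Nat.succ_le_succ_iff.mp (by simpa using hlen))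
            ⟨hlne, hl⟩ ⟨hmne, hm⟩
          rw [inductance_eq_F l hlne, inductance_eq_F m hmne, hF]
        rw [this]

lemma inductance_surj_aux :
    ∀ n : ℕ, ∀ q : ℚ, q.den ≤ n → 0 < q → q < 1 →
      ∃ A : List ℤ, Admissible A ∧ inductance A = q := by
  intro n
  induction n with
  | zero => intro q hden _ _; exact absurd (le_trans q.pos hden) (by norm_num)
  | succ n ih =>
    intro q hden h0 h1
    set a : ℤ := ⌈(1 / q : ℚ)⌉ with ha_def
    have hq1 : 1 < 1 / q := one_lt_one_div h0 h1
    have ha2 : 2 ≤ a := by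
      have : (1 : ℤ) < a := Int.lt_ceil.mpr (by exact_mod_cast hq1)
      omega
    have hle : (1 / q : ℚ) ≤ a := Int.le_ceil _
    have hlt : (a : ℚ) < 1 / q + 1 := Int.ceil_lt_add_one _
    set t : ℚ := (a : ℚ) - 1 / q with ht_def
    have ht0 : 0 ≤ t := by rw [ht_def]; linarith
    have ht1 : t < 1 := by rw [ht_def]; linarith
    rcases eq_or_lt_of_le ht0 with hteq | htpos
    · refine ⟨[a], ⟨by simp, by intro x hx; simp at hx; omega⟩, ?_⟩
      rw [inductance_cons a [] ha2 (by simp)]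
      rw [show F [] = 0 from rfl]
      have : (a : ℚ) = 1 / q := by rw [ht_def] at hteq; linarith
      rw [this, sub_zero, one_div_one_div]
    · -- t > 0, denominator decreases
      have hnum_pos : 0 < q.num := Rat.num_pos.mpr h0
      have hq_eq : (q.num : ℚ) / (q.den : ℚ) = q := Rat.num_div_den q
      have hden_pos : (0 : ℚ) < (q.den : ℚ) := by exact_mod_cast q.pos
      have hnum_pos' : (0 : ℚ) < (q.num : ℚ) := by exact_mod_cast hnum_pos
      have key : t = Rat.divInt (a * q.num - q.den) q.num := by
        have hq0 : q ≠ 0 := ne_of_gt h0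
        have hnd : (q.num : ℚ) = q * q.den :=
          (div_eq_iff (ne_of_gt hden_pos)).mp hq_eq
        rw [Rat.divInt_eq_div, ht_def]
        push_cast
        rw [eq_div_iff (ne_of_gt hnum_pos'), sub_mul]
        have h1qn : (1 / q) * (q.num : ℚ) = q.den := by
          rw [hnd, one_div, inv_mul_cancel_left₀ hq0]
        rw [h1qn]
      have hdvd : ((t.den : ℤ)) ∣ q.num := by rw [key]; exact Rat.den_dvd _ _
      have hden_lt : t.den < q.den := by
        have h2 : (t.den : ℤ) ≤ q.num := Int.le_of_dvd hnum_pos hdvd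
        have h3 : (q.num : ℚ) < (q.den : ℚ) := by
          rw [← hq_eq] at h1
          rw [div_lt_one hden_pos] at h1
          exact h1
        have h3' : q.num < (q.den : ℤ) := by exact_mod_cast h3
        have : (t.den : ℤ) < (q.den : ℤ) := lt_of_le_of_lt h2 h3'
        exact_mod_cast this
      obtain ⟨l, hladm, hel⟩ := ih t (by omega) htpos ht1
      refine ⟨a :: l, ⟨by simp, ?_⟩, ?_⟩
      · intro x hx
        rcases List.mem_cons.1 hx with rfl | hx
        · exact ha2
        · exact hladm.2 x hx
      · rw [inductance_cons a l ha2 hladm.2, ← inductance_eq_F l hladm.1, hel]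
        rw [show (a : ℚ) - t = 1 / q by rw [ht_def]; ring]
        rw [one_div_one_div]

/-- The inductance `A ↦ e(A)` is a bijection from the set of all admissible linear
chains onto the set of rational numbers in the open interval `(0,1)`. -/
theorem inductance_bijOn :
    Set.BijOn inductance {A : List ℤ | Admissible A} (Set.Ioo (0 : ℚ) 1) := by
  refine ⟨fun A hA => inductance_mem_Ioo A hA, ?_, ?_⟩
  · intro A hA B hB h
    exact inductance_injOn_aux A.length A B le_rfl hA hB h
  · intro q hq
    obtain ⟨A, hA, hAq⟩ := inductance_surj_aux q.den q le_rfl hq.1 hq.2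
    exact ⟨A, hA, hAq⟩
end

section
/- Let A and B be admissible linear chains with e(B) = 1 − e(Aᵀ), i.e. B = A*. Then d(A) = d(B) and d(A) = d(B̅) + d(A̲). -/
section Tridiagonal

variable {R : Type*} [CommRing R]

def tridiag {n : ℕ} (d : Fin n → R) : Matrix (Fin n) (Fin n) R := fun i j =>
  if i = j then d i else if (i : ℕ) + 1 = j ∨ (j : ℕ) + 1 = i then -1 else 0

lemma tridiag_submatrix_succ {n : ℕ} (d : Fin (n + 1) → R) :
    (tridiag d).submatrix Fin.succ Fin.succ = tridiag (d ∘ Fin.succ) := by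
  ext i j
  simp [tridiag, Fin.succ_inj]

lemma det_tridiag_succ_succ {n : ℕ} (d : Fin (n + 2) → R) :
    (tridiag d).det =
      d 0 * (tridiag (d ∘ Fin.succ)).det - (tridiag (d ∘ Fin.succ ∘ Fin.succ)).det := by
  set M := tridiag d
  have minor_zero :
      (M.submatrix Fin.succ (Fin.succAbove 0)).det = (tridiag (d ∘ Fin.succ)).det := by
    rw [Fin.succAbove_zero, tridiag_submatrix_succ]
  have minor_one : (M.submatrix Fin.succ (Fin.succAbove 1)).det =
      -(tridiag (d ∘ Fin.succ ∘ Fin.succ)).det := by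
    have col_zero : ∀ i : Fin n, M.submatrix Fin.succ (Fin.succAbove 1) i.succ 0 = 0 := by
      intro i
      simp [M, tridiag, Fin.ext_iff]
    have minor : (M.submatrix Fin.succ (Fin.succAbove 1)).submatrix (Fin.succAbove 0) Fin.succ =
        tridiag (d ∘ Fin.succ ∘ Fin.succ) := by
      ext i j
      simp [M, tridiag, Fin.ext_iff]
    have entry : M.submatrix Fin.succ (Fin.succAbove 1) 0 0 = -1 := by simp [M, tridiag]
    rw [Matrix.det_succ_column_zero, Fin.sum_univ_succ]
    simp only [col_zero, minor, entry]
    simp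
  have row_zero : ∀ j : Fin n, M 0 j.succ.succ = 0 := by
    intro j
    simp [M, tridiag, Fin.ext_iff]
  have entry_zero : M 0 0 = d 0 := by simp [M, tridiag]
  have entry_one : M 0 1 = -1 := by simp [M, tridiag]
  rw [Matrix.det_succ_row_zero, Fin.sum_univ_succ, Fin.sum_univ_succ]
  simp only [row_zero, minor_zero, Fin.succ_zero_eq_one, minor_one, entry_zero, entry_one]
  simp
  ring

end Tridiagonal

lemma chainMatrix_eq_tridiag (A : List ℤ) : chainMatrix A = tridiag A.get := rfl

lemma disc_cons_cons (a b : ℤ) (C : List ℤ) :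
    disc (a :: b :: C) = a * disc (b :: C) - disc C := by
  rw [disc, chainMatrix_eq_tridiag]
  exact det_tridiag_succ_succ _

lemma chainMatrix_reverse (A : List ℤ) :
    chainMatrix A.reverse =
      (chainMatrix A).submatrix (Fin.rev ∘ Fin.cast A.length_reverse)
        (Fin.rev ∘ Fin.cast A.length_reverse) := by
  ext i j
  have hi : (i : ℕ) < A.length := i.isLt.trans_eq A.length_reverse
  have hj : (j : ℕ) < A.length := j.isLt.trans_eq A.length_reverse
  simp only [chainMatrix, Function.comp_apply, Matrix.submatrix_apply, Fin.ext_iff, Fin.val_rev,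
    Fin.val_cast, List.get_eq_getElem, List.getElem_reverse]
  split_ifs <;> first | rfl | omega | (congr 1; omega)

lemma disc_reverse (A : List ℤ) : disc A.reverse = disc A := by
  rw [disc, chainMatrix_reverse]
  exact Matrix.det_submatrix_equiv_self ((finCongr A.length_reverse).trans Fin.revPerm) _

lemma inductance_reverse (A : List ℤ) : inductance A.reverse = disc A.dropLast / disc A := by
  rw [inductance, List.tail_reverse, disc_reverse, disc_reverse]

lemma disc_tail_pos_and_lt_disc :
    ∀ {A : List ℤ}, (∀ a ∈ A, 2 ≤ a) → A ≠ [] → 0 < disc A.tail ∧ disc A.tail < disc A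
  | [a], hA, _ => by
    rw [List.tail_cons, disc_nil, disc_singleton]
    have := hA a List.mem_cons_self
    omega
  | a :: b :: C, hA, _ => by
    obtain ⟨hC, hCb⟩ :=
      disc_tail_pos_and_lt_disc (fun x hx => hA x (.tail a hx)) (List.cons_ne_nil b C)
    have ha := hA a List.mem_cons_self
    rw [List.tail_cons] at hC hCb ⊢
    rw [disc_cons_cons]
    constructor <;> nlinarith

lemma disc_pos {A : List ℤ} (hA : ∀ a ∈ A, 2 ≤ a) : 0 < disc A := by
  cases A with
  | nil => rw [disc_nil]; exact one_pos
  | cons a A =>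
    obtain ⟨h₀, h₁⟩ := disc_tail_pos_and_lt_disc hA (List.cons_ne_nil a A)
    exact h₀.trans h₁

lemma isCoprime_disc_disc_tail : ∀ A : List ℤ, IsCoprime (disc A) (disc A.tail)
  | [] => by rw [List.tail_nil, disc_nil]; exact isCoprime_one_left
  | [_] => by rw [List.tail_cons, disc_nil]; exact isCoprime_one_right
  | a :: b :: C => by
    rw [List.tail_cons, disc_cons_cons]
    exact IsCoprime.mul_sub_right_left_iff.mpr (isCoprime_disc_disc_tail (b :: C)).symm

lemma isCoprime_disc_disc_dropLast (A : List ℤ) : IsCoprime (disc A) (disc A.dropLast) := by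
  simpa [List.tail_reverse, disc_reverse] using isCoprime_disc_disc_tail A.reverse

/-- Lemma 2.2 (ii): if `B = A*` (i.e. `e(B) = 1 − e(Aᵀ)`), then
`d(A) = d(A*)` and `d(A) = d(A̅*) + d(A̲)`. -/
theorem disc_adjoint (A B : List ℤ) (hA : Admissible A) (hB : Admissible B)
    (hAB : inductance B = 1 - inductance A.reverse) :
    disc A = disc B ∧ disc A = disc B.tail + disc A.dropLast := by
  have hApos := disc_pos hA.2
  have hcop : IsCoprime (disc A - disc A.dropLast) (disc A) := by
    simpa using (IsCoprime.mul_sub_left_left_iff (z := 1)).mpr (isCoprime_disc_disc_dropLast A).symm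
  have hfrac : (disc B.tail : ℚ) / disc B = ((disc A - disc A.dropLast : ℤ) : ℚ) / disc A := by
    rw [← inductance, hAB, inductance_reverse]
    field_simp
    push_cast
    ring
  obtain ⟨htail, hdisc⟩ := Rat.div_int_inj (disc_pos hB.2) hApos
    (Int.isCoprime_iff_gcd_eq_one.mp (isCoprime_disc_disc_tail B).symm)
    (Int.isCoprime_iff_gcd_eq_one.mp hcop) hfrac
  exact ⟨hdisc.symm, by omega⟩
end

section
/- (i) Let A be an admissible linear chain and B a nonempty integer list, and suppose A ++ [1] shrinks to B by a nonempty sequence of single blow-downs. Then n := r(A) + 1 − r(B) ≥ 1 and A = B ∗ TWₙ. (ii) Conversely, for every nonempty integer list B and every positive integer n, the list (B ∗ TWₙ) ++ [1] shrinks to B. -/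
/-- `TW n`: the list consisting of `n` copies of the integer `2`. -/
def TW (n : ℕ) : List ℤ := List.replicate n 2

/-- The `∗`-product of two (nonempty) integer lists:
`[a₁,…,a_r] ∗ [b₁,…,b_s] = [a₁,…,a_{r−1}, a_r + b₁ − 1, b₂,…,b_s]`. -/
def sprod (A B : List ℤ) : List ℤ :=
  A.dropLast ++ (A.getLast! + B.head! - 1) :: B.tail

/-- Decrease the first entry of a list by `1` (do nothing to the empty list). -/
def decHead : List ℤ → List ℤ
  | [] => []
  | a :: l => (a - 1) :: l

/-- Decrease the last entry of a list by `1` (do nothing to the empty list). -/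
def decLast (l : List ℤ) : List ℤ := (decHead l.reverse).reverse

/-- A single blow-down of an integer list: remove one entry equal to `1` and decrease
by `1` each entry adjacent to it (one entry if the `1` is at an end of the list,
two entries if it is interior). -/
def BlowdownStep (L L' : List ℤ) : Prop :=
  ∃ P S : List ℤ, L = P ++ 1 :: S ∧ L' = decLast P ++ decHead S

/-- `Shrinks A B`: `B` can be obtained from `A` by a finite sequence of single blow-downs. -/
def Shrinks : List ℤ → List ℤ → Prop := Relation.ReflTransGen BlowdownStep


lemma getLast!_concat' (l : List ℤ) (a : ℤ) : (l ++ [a]).getLast! = a := by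
  cases l with
  | nil => rfl
  | cons x xs => simp [List.getLast!, List.getLast_append]

lemma decHead_length (l : List ℤ) : (decHead l).length = l.length := by
  cases l <;> simp [decHead]

lemma decLast_length (l : List ℤ) : (decLast l).length = l.length := by
  simp [decLast, decHead_length]

lemma decLast_concat (A : List ℤ) (a : ℤ) : decLast (A ++ [a]) = A ++ [a - 1] := by
  simp [decLast, decHead]

lemma step_length {L L' : List ℤ} (h : BlowdownStep L L') : L'.length + 1 = L.length := by
  obtain ⟨P, S, rfl, rfl⟩ := h
  simp [decLast_length, decHead_length]
  omega

lemma step_mem_one {L L' : List ℤ} (h : BlowdownStep L L') : (1 : ℤ) ∈ L := by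
  obtain ⟨P, S, rfl, -⟩ := h
  simp

lemma shrinks_length {L B : List ℤ} (h : Shrinks L B) : B.length ≤ L.length := by
  induction h with
  | refl => exact le_refl _
  | tail _ hstep ih =>
    have := step_length hstep
    omega

lemma shrinks_of_no_one {L B : List ℤ} (h1 : (1 : ℤ) ∉ L) (h : Shrinks L B) : B = L := by
  rcases (Relation.ReflTransGen.cases_head h) with rfl | ⟨C, hC, -⟩
  · rfl
  · exact absurd (step_mem_one hC) h1

lemma step_unique {A C : List ℤ} (hA : ∀ a ∈ A, 2 ≤ a)
    (h : BlowdownStep (A ++ [1]) C) : C = decLast A := by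
  obtain ⟨P, S, hPS, rfl⟩ := h
  rcases S.eq_nil_or_concat with rfl | ⟨S', s, rfl⟩
  · have : P = A := by
      have := hPS
      simpa using List.append_inj_left' this.symm rfl
    subst this
    simp [decHead]
  · exfalso
    have h2 : A ++ [1] = (P ++ 1 :: S') ++ [s] := by simpa using hPS
    have hA' : A = P ++ 1 :: S' := List.append_inj_left' h2 rfl
    have : (2 : ℤ) ≤ 1 := hA 1 (by rw [hA']; simp)
    omega

lemma sprod_concat_TW1 (B' : List ℤ) (b : ℤ) : sprod (B' ++ [b]) (TW 1) = B' ++ [b + 1] := by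
  simp [sprod, TW, getLast!_concat']
  ring_nf

lemma sprod_TW_succ (B : List ℤ) {n : ℕ} (hn : 1 ≤ n) :
    sprod B (TW (n + 1)) = sprod B (TW n) ++ [2] := by
  obtain ⟨m, rfl⟩ : ∃ m, n = m + 1 := ⟨n - 1, by omega⟩
  have key : (2:ℤ) :: List.replicate m 2 = List.replicate m 2 ++ [2] := by
    rw [← List.replicate_succ, List.replicate_succ']
  simp only [sprod, TW, List.replicate_succ, List.head!, List.tail_cons]
  rw [key]
  simp

lemma step_concat_one (L : List ℤ) : BlowdownStep (L ++ [1]) (decLast L) :=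
  ⟨L, [], rfl, by simp [decHead]⟩

lemma main_aux : ∀ A : List ℤ, (∀ a ∈ A, 2 ≤ a) → ∀ B : List ℤ, B ≠ [] →
    Shrinks (A ++ [1]) B →
    B = A ++ [1] ∨ (B.length ≤ A.length ∧ A = sprod B (TW (A.length + 1 - B.length))) := by
  intro A
  induction A using List.reverseRecOn with
  | nil =>
    intro _ B hB hsh
    rcases Relation.ReflTransGen.cases_head hsh with rfl | ⟨C, hC, hrest⟩
    · exact Or.inl rfl
    · have : C = decLast [] := step_unique (by simp) hC
      subst this
      have : B = decLast [] := shrinks_of_no_one (by simp [decLast, decHead]) hrest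
      simp [decLast, decHead] at this
      exact absurd this hB
  | append_singleton A' a ih =>
    intro hA B hB hsh
    rcases Relation.ReflTransGen.cases_head hsh with rfl | ⟨C, hC, hrest⟩
    · exact Or.inl rfl
    · have hC' : C = A' ++ [a - 1] := by rw [step_unique hA hC, decLast_concat]
      subst hC'
      have ha : 2 ≤ a := hA a (by simp)
      have hA' : ∀ x ∈ A', 2 ≤ x := fun x hx => hA x (by simp [hx])
      by_cases h3 : a = 2
      · subst h3
        norm_num at hrest
        rcases ih hA' B hB hrest with rfl | ⟨hlen, heq⟩
        · right
          constructor
          · simp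
          · have : (A' ++ [(2:ℤ)]).length + 1 - (A' ++ [(1:ℤ)]).length = 1 := by simp
            rw [this, sprod_concat_TW1]
            norm_num
        · right
          have hBlen : 1 ≤ B.length := by
            cases B with
            | nil => exact absurd rfl hB
            | cons x xs => simp
          constructor
          · simp; omega
          · have hn : 1 ≤ A'.length + 1 - B.length := by omega
            have hkey : (A' ++ [(2:ℤ)]).length + 1 - B.length = (A'.length + 1 - B.length) + 1 := by
              simp; omega
            rw [hkey, sprod_TW_succ B hn, ← heq]
      · -- a ≥ 3, so A' ++ [a-1] has no 1
        have hno1 : (1 : ℤ) ∉ A' ++ [a - 1] := by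
          intro hmem
          rcases List.mem_append.mp hmem with h | h
          · have := hA' 1 h; omega
          · simp at h; omega
        have hBeq : B = A' ++ [a - 1] := shrinks_of_no_one hno1 hrest
        right
        subst hBeq
        constructor
        · simp
        · have : (A' ++ [a]).length + 1 - (A' ++ [a - 1]).length = 1 := by simp
          rw [this, sprod_concat_TW1]
          ring_nf

lemma part2 : ∀ (n : ℕ), 0 < n → ∀ B : List ℤ, B ≠ [] → Shrinks (sprod B (TW n) ++ [1]) B := by
  intro n
  induction n with
  | zero => omega
  | succ m ih =>
    intro _ B hB
    rcases Nat.eq_zero_or_pos m with rfl | hm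
    · obtain ⟨B', b, rfl⟩ := B.eq_nil_or_concat.resolve_left hB
      rw [List.concat_eq_append, sprod_concat_TW1]
      have := step_concat_one (B' ++ [b + 1])
      rw [decLast_concat] at this
      have heq : b + 1 - 1 = b := by ring
      rw [heq] at this
      exact Relation.ReflTransGen.single this
    · rw [sprod_TW_succ B hm]
      have hstep := step_concat_one (sprod B (TW m) ++ [2])
      rw [decLast_concat, show (2:ℤ) - 1 = 1 from by norm_num] at hstep
      exact Relation.ReflTransGen.head hstep (ih hm B hB)

/-- Lemma 2.4: (i) if `A` is admissible, `B` is a nonempty integer list, and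
`[A,1]` shrinks to `B` by a nonempty sequence of single blow-downs, then
`n := r(A) + 1 − r(B) ≥ 1` and `A = B ∗ TWₙ`; (ii) conversely,
`[B ∗ TWₙ, 1]` shrinks to `B` for every nonempty integer list `B` and
positive integer `n`. -/
theorem shrink_append_one :
    (∀ A B : List ℤ, Admissible A → B ≠ [] →
      Relation.TransGen BlowdownStep (A ++ [1]) B →
      B.length ≤ A.length ∧ A = sprod B (TW (A.length + 1 - B.length))) ∧
    (∀ (B : List ℤ) (n : ℕ), B ≠ [] → 0 < n →
      Shrinks (sprod B (TW n) ++ [1]) B) := by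
  constructor
  · intro A B hA hB htg
    obtain ⟨C, hstep, hrest⟩ := Relation.TransGen.head'_iff.mp htg
    have hlenC : C.length + 1 = (A ++ [1]).length := step_length hstep
    have hlenB : B.length ≤ C.length := shrinks_length hrest
    have hBne : B ≠ A ++ [1] := by
      intro h
      rw [h] at hlenB
      simp at hlenB hlenC
      omega
    rcases main_aux A hA.2 B hB (Relation.TransGen.to_reflTransGen htg) with h | h
    · exact absurd h hBne
    · exact h
  · intro B n hB hn
    exact part2 n hn B hB
end

section
/- For all t₁, t₂, t₃ ∈ ℂ, the determinant of the 3×3 matrix whose i-th row is (tᵢ, −tᵢ², tᵢ³ − 1) equals (1 − t₁t₂t₃)(t₂ − t₁)(t₃ − t₁)(t₃ − t₂). Consequently, for pairwise distinct nonzero t₁, t₂, t₃ ∈ ℂ, the three points φ(tᵢ) = (tᵢ : −tᵢ² : tᵢ³ − 1) of ℙ²(ℂ), all of which lie on the nodal cubic N, are collinear if and only if t₁t₂t₃ = 1. -/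
/-- For `t₁, t₂, t₃ ∈ ℂ`, the determinant of the matrix whose `i`-th row is
`(tᵢ, −tᵢ², tᵢ³ − 1)` equals `(1 − t₁t₂t₃)(t₂ − t₁)(t₃ − t₁)(t₃ − t₂)`; consequently,
for pairwise distinct nonzero `t₁, t₂, t₃`, the points `φ(tᵢ) = (tᵢ : −tᵢ² : tᵢ³ − 1)`
on the nodal cubic `x³ + y³ − xyz = 0` are collinear iff `t₁t₂t₃ = 1`. -/
theorem nodal_cubic_collinear :
    (∀ t₁ t₂ t₃ : ℂ,
      Matrix.det !![t₁, -t₁ ^ 2, t₁ ^ 3 - 1;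
                    t₂, -t₂ ^ 2, t₂ ^ 3 - 1;
                    t₃, -t₃ ^ 2, t₃ ^ 3 - 1] =
        (1 - t₁ * t₂ * t₃) * (t₂ - t₁) * (t₃ - t₁) * (t₃ - t₂)) ∧
    (∀ t₁ t₂ t₃ : ℂ, t₁ ≠ 0 → t₂ ≠ 0 → t₃ ≠ 0 →
      t₁ ≠ t₂ → t₁ ≠ t₃ → t₂ ≠ t₃ →
      (Matrix.det !![t₁, -t₁ ^ 2, t₁ ^ 3 - 1;
                     t₂, -t₂ ^ 2, t₂ ^ 3 - 1;
                     t₃, -t₃ ^ 2, t₃ ^ 3 - 1] = 0 ↔ t₁ * t₂ * t₃ = 1)) := by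
  have hdet : ∀ t₁ t₂ t₃ : ℂ,
      Matrix.det !![t₁, -t₁ ^ 2, t₁ ^ 3 - 1;
                    t₂, -t₂ ^ 2, t₂ ^ 3 - 1;
                    t₃, -t₃ ^ 2, t₃ ^ 3 - 1] =
        (1 - t₁ * t₂ * t₃) * (t₂ - t₁) * (t₃ - t₁) * (t₃ - t₂) := by
    intro t₁ t₂ t₃
    simp [Matrix.det_fin_three]
    ring
  refine ⟨hdet, fun t₁ t₂ t₃ h₁ h₂ h₃ h12 h13 h23 => ?_⟩
  rw [hdet]
  constructor
  · intro h
    rcases mul_eq_zero.1 h with h | h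
    · rcases mul_eq_zero.1 h with h | h
      · rcases mul_eq_zero.1 h with h | h
        · linear_combination -h
        · exact absurd (by linear_combination h) (Ne.symm h12)
      · exact absurd (by linear_combination h) (Ne.symm h13)
    · exact absurd (by linear_combination h) (Ne.symm h23)
  · intro h
    rw [h]
    ring
end

section
/- Let ω = e^{2πi/3} and define the three conics Q₁: 21(x² + y²) − 22xy − 6(x + y)z + z² = 0, Q₂: 21(ωx² + ω²y²) − 22xy − 6(ω²x + ωy)z + z² = 0, Q₃: 21(ω²x² + ωy²) − 22xy − 6(ωx + ω²y)z + z² = 0, and the points P₁ = (−1, −1, −2), P₂ = (−ω, −ω², −2), P₃ = (−ω², −ω, −2) of ℂ³. Then for each k ∈ {1,2,3} and every (x, y, z) ∈ ℂ³ ∖ {0}: the equations x³ + y³ − xyz = 0 and Q_k(x, y, z) = 0 both hold if and only if (x, y, z) is a nonzero complex scalar multiple of P_k. In particular, the conic Q_k intersects the nodal cubic N only at the single point P_k = φ(−1), φ(−ω), φ(−ω²) respectively. -/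
open Complex in
/-- `ω = e^{2πi/3}`. -/
noncomputable def ω : ℂ := Complex.exp (2 * Real.pi * Complex.I / 3)

/-- The three conics `Q₁`, `Q₂`, `Q₃` of the appendix (as functions on `ℂ³`). -/
noncomputable def Qconic : Fin 3 → ℂ → ℂ → ℂ → ℂ
  | 0 => fun x y z => 21 * (x ^ 2 + y ^ 2) - 22 * x * y - 6 * (x + y) * z + z ^ 2
  | 1 => fun x y z =>
      21 * (ω * x ^ 2 + ω ^ 2 * y ^ 2) - 22 * x * y - 6 * (ω ^ 2 * x + ω * y) * z + z ^ 2
  | 2 => fun x y z =>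
      21 * (ω ^ 2 * x ^ 2 + ω * y ^ 2) - 22 * x * y - 6 * (ω * x + ω ^ 2 * y) * z + z ^ 2

/-- The points `P₁ = φ(−1)`, `P₂ = φ(−ω)`, `P₃ = φ(−ω²)` of `ℂ³`. -/
noncomputable def Pt : Fin 3 → ℂ × ℂ × ℂ
  | 0 => (-1, -1, -2)
  | 1 => (-ω, -ω ^ 2, -2)
  | 2 => (-ω ^ 2, -ω, -2)

lemma omega_cube : ω ^ 3 = 1 := by
  have h : ((3 : ℕ) : ℂ) * (2 * (Real.pi : ℂ) * Complex.I / 3) = 2 * Real.pi * Complex.I := by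
    push_cast; ring
  rw [ω, ← Complex.exp_nat_mul, h, Complex.exp_two_pi_mul_I]

lemma omega_ne_zero : ω ≠ 0 := Complex.exp_ne_zero _

/-- Core case `k = 0`: the only solutions are on the line `x = y, z = 2x`. -/
lemma main0 (x y z : ℂ) (h1 : x ^ 3 + y ^ 3 - x * y * z = 0)
    (h2 : 21 * (x ^ 2 + y ^ 2) - 22 * x * y - 6 * (x + y) * z + z ^ 2 = 0) :
    x = y ∧ z = 2 * x := by
  have e1 : (x - y) ^ 6 = 0 := by
    linear_combination (x ^ 3 + y ^ 3 + x * y * z - 6 * x * y ^ 2 - 6 * x ^ 2 * y) * h1 +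
      (x ^ 2 * y ^ 2) * h2
  have e2 : (z - 2 * x) ^ 6 = 0 := by
    linear_combination (64 * x ^ 3 - 192 * x ^ 2 * z - 903 * x * y ^ 2 + 631 * x * y * z +
        177 * x * z ^ 2 + 441 * y ^ 3 + 294 * y ^ 2 * z - 414 * y * z ^ 2 - 16 * z ^ 3) * h1 +
      (43 * x ^ 2 * y ^ 2 - 27 * x ^ 2 * y * z + 3 * x ^ 2 * z ^ 2 + 21 * x * y ^ 3 -
        30 * x * y ^ 2 * z + 6 * x * y * z ^ 2 - 6 * x * z ^ 3 - 21 * y ^ 4 - 20 * y ^ 3 * z +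
        15 * y ^ 2 * z ^ 2 + 6 * y * z ^ 3 + z ^ 4) * h2
  constructor
  · exact sub_eq_zero.mp (pow_eq_zero_iff (n := 6) (by norm_num) |>.mp e1)
  · exact sub_eq_zero.mp (pow_eq_zero_iff (n := 6) (by norm_num) |>.mp e2)

/-- Appendix, first half of the Theorem: for each `k`, a nonzero `(x,y,z) ∈ ℂ³` lies
on both the nodal cubic `x³ + y³ − xyz = 0` and the conic `Q_k` if and only if it is a
nonzero scalar multiple of `P_k`; in particular `Q_k` meets the nodal cubic `N` only
at the single point `P_k`. -/
theorem conic_meets_nodal_cubic_at_one_point (k : Fin 3) (x y z : ℂ)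
    (hxyz : (x, y, z) ≠ (0, 0, 0)) :
    (x ^ 3 + y ^ 3 - x * y * z = 0 ∧ Qconic k x y z = 0) ↔
      ∃ t : ℂ, t ≠ 0 ∧ (x, y, z) = t • Pt k := by
  have hω := omega_cube
  have hω0 := omega_ne_zero
  fin_cases k
  · -- k = 0
    simp only [Qconic, Pt, Prod.smul_mk, smul_eq_mul, Prod.mk.injEq]
    constructor
    · rintro ⟨h1, h2⟩
      obtain ⟨hxy, hz⟩ := main0 x y z h1 h2
      have hx0 : x ≠ 0 := by
        intro h0
        apply hxyz
        have hy0 : y = 0 := by rw [← hxy, h0]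
        have hz0 : z = 0 := by rw [hz, h0, mul_zero]
        rw [h0, hy0, hz0]
      exact ⟨-x, neg_ne_zero.mpr hx0, by ring, by rw [← hxy]; ring, by rw [hz]; ring⟩
    · rintro ⟨t, ht, hx, hy, hz⟩
      subst hx hy hz
      constructor <;> ring
  · -- k = 1
    simp only [Qconic, Pt, Prod.smul_mk, smul_eq_mul, Prod.mk.injEq]
    constructor
    · rintro ⟨h1, h2⟩
      have h1' : (ω ^ 2 * x) ^ 3 + (ω * y) ^ 3 - (ω ^ 2 * x) * (ω * y) * z = 0 := by
        linear_combination h1 + ((ω ^ 3 + 1) * x ^ 3 + y ^ 3 - x * y * z) * hω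
      have h2' : 21 * ((ω ^ 2 * x) ^ 2 + (ω * y) ^ 2) - 22 * (ω ^ 2 * x) * (ω * y) -
          6 * (ω ^ 2 * x + ω * y) * z + z ^ 2 = 0 := by
        linear_combination h2 + (21 * ω * x ^ 2 - 22 * x * y) * hω
      obtain ⟨hxy, hz⟩ := main0 _ _ _ h1' h2'
      have hx0 : x ≠ 0 := by
        intro h0
        apply hxyz
        have hy0 : y = 0 := by
          have h' : ω * y = 0 := by rw [← hxy, h0]; ring
          exact (mul_eq_zero.mp h').resolve_left hω0
        have hz0 : z = 0 := by rw [hz, h0]; ring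
        rw [h0, hy0, hz0]
      refine ⟨-(ω ^ 2 * x), by simp [hx0, hω0], ?_, ?_, ?_⟩
      · linear_combination (-x) * hω
      · have hy : y = ω * x := by linear_combination (-ω ^ 2) * hxy + (ω * x - y) * hω
        linear_combination hy - ω * x * hω
      · linear_combination hz
    · rintro ⟨t, ht, hx, hy, hz⟩
      subst hx hy hz
      constructor
      · linear_combination (-(t ^ 3 * ω ^ 3)) * hω
      · linear_combination (21 * t ^ 2 * ω ^ 3 - 4 * t ^ 2) * hω
  · -- k = 2
    simp only [Qconic, Pt, Prod.smul_mk, smul_eq_mul, Prod.mk.injEq]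
    constructor
    · rintro ⟨h1, h2⟩
      have h1' : (ω * x) ^ 3 + (ω ^ 2 * y) ^ 3 - (ω * x) * (ω ^ 2 * y) * z = 0 := by
        linear_combination h1 + (x ^ 3 + (ω ^ 3 + 1) * y ^ 3 - x * y * z) * hω
      have h2' : 21 * ((ω * x) ^ 2 + (ω ^ 2 * y) ^ 2) - 22 * (ω * x) * (ω ^ 2 * y) -
          6 * (ω * x + ω ^ 2 * y) * z + z ^ 2 = 0 := by
        linear_combination h2 + (21 * ω * y ^ 2 - 22 * x * y) * hω
      obtain ⟨hxy, hz⟩ := main0 _ _ _ h1' h2'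
      have hx0 : x ≠ 0 := by
        intro h0
        apply hxyz
        have hy0 : y = 0 := by
          have h' : ω ^ 2 * y = 0 := by rw [← hxy, h0]; ring
          exact (mul_eq_zero.mp h').resolve_left (pow_ne_zero _ hω0)
        have hz0 : z = 0 := by rw [hz, h0]; ring
        rw [h0, hy0, hz0]
      refine ⟨-(ω * x), by simp [hx0, hω0], ?_, ?_, ?_⟩
      · linear_combination (-x) * hω
      · have hx2 : x = ω * y := by linear_combination ω ^ 2 * hxy + (ω * y - x) * hω
        have hy : y = ω ^ 2 * x := by linear_combination (-ω ^ 2) * hx2 - y * hω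
        linear_combination hy
      · linear_combination hz
    · rintro ⟨t, ht, hx, hy, hz⟩
      subst hx hy hz
      constructor
      · linear_combination (-(t ^ 3 * ω ^ 3)) * hω
      · linear_combination (21 * t ^ 2 * ω ^ 3 - 4 * t ^ 2) * hω
end
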